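/- If F satisfies the Beltrami-differential invariance (F∘γ)·(γ̄'/γ') = F for a Möbius transformation γ (where γ̄' denotes the complex conjugate of γ'), then B[F,G] − (B[F,G]∘γ)·γ̄' = B[F,H] where H = G − (G∘γ)/γ'. -/

import Mathlib

open Complex

/-- Wirtinger derivative `∂/∂z` of a (not necessarily holomorphic) function. -/
noncomputable def wderiv (F : ℂ → ℂ) (z : ℂ) : ℂ :=
  (fderiv ℝ F z 1 - Complex.I * fderiv ℝ F z Complex.I) / 2

/-- The bilinear form `B_q[F,G] = F_{zz}G + FG_{zz} − F_zG_z + 2qFG`,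
with `z`-derivatives in the Wirtinger sense. -/
noncomputable def Bform (q F G : ℂ → ℂ) (z : ℂ) : ℂ :=
  wderiv (wderiv F) z * G z + F z * wderiv (wderiv G) z
    - wderiv F z * wderiv G z + 2 * q z * F z * G z

lemma linC (L : ℂ →L[ℝ] ℂ) (w : ℂ) : L w = w.re * L 1 + w.im * L I := by
  have h : w = w.re • (1:ℂ) + w.im • I := by
    rw [Complex.real_smul, Complex.real_smul, mul_one, Complex.re_add_im]
  calc L w = L (w.re • (1:ℂ) + w.im • I) := by rw [← h]
    _ = w.re • L 1 + w.im • L I := by rw [map_add, map_smul, map_smul]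
    _ = _ := by rw [Complex.real_smul, Complex.real_smul]

lemma wderiv_congr {f g : ℂ → ℂ} {z : ℂ} (h : f =ᶠ[nhds z] g) :
    wderiv f z = wderiv g z := by
  unfold wderiv; rw [h.fderiv_eq]

lemma HasDerivAt.wderiv_eq {f : ℂ → ℂ} {f' z : ℂ} (h : HasDerivAt f f' z) :
    wderiv f z = f' := by
  have h2 : fderiv ℝ f z = (fderiv ℂ f z).restrictScalars ℝ :=
    h.differentiableAt.fderiv_restrictScalars ℝ
  have h3 : fderiv ℂ f z = ContinuousLinearMap.smulRight (1 : ℂ →L[ℂ] ℂ) f' :=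
    h.hasFDerivAt.fderiv
  unfold wderiv
  rw [h2, h3]
  simp only [ContinuousLinearMap.coe_restrictScalars',
    ContinuousLinearMap.smulRight_apply, ContinuousLinearMap.one_apply,
    smul_eq_mul, one_mul]
  have : Complex.I * (Complex.I * f') = -f' := by
    rw [← mul_assoc, Complex.I_mul_I]; ring
  rw [this]; ring

lemma wderiv_comp {f g : ℂ → ℂ} {g' z : ℂ} (hg : HasDerivAt g g' z)
    (hf : DifferentiableAt ℝ f (g z)) :
    wderiv (fun w => f (g w)) z = wderiv f (g z) * g' := by
  have hgR : HasFDerivAt g ((ContinuousLinearMap.smulRight (1 : ℂ →L[ℂ] ℂ) g').restrictScalars ℝ) z :=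
    hg.hasFDerivAt.restrictScalars ℝ
  have hcomp := (hf.hasFDerivAt.comp z hgR).fderiv
  have heq : (fun w => f (g w)) = f ∘ g := rfl
  rw [heq]
  unfold wderiv
  rw [hcomp]
  set L := fderiv ℝ f (g z)
  simp only [ContinuousLinearMap.coe_comp', Function.comp_apply,
    ContinuousLinearMap.coe_restrictScalars', ContinuousLinearMap.smulRight_apply,
    ContinuousLinearMap.one_apply, smul_eq_mul, one_mul]
  rw [linC L g', linC L (Complex.I * g')]
  simp only [Complex.mul_re, Complex.mul_im, Complex.I_re, Complex.I_im]
  have hg' : g' = (g'.re : ℂ) + g'.im * I := (Complex.re_add_im g').symm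
  have hI : (I:ℂ) * I = -1 := Complex.I_mul_I
  push_cast
  linear_combination ((L 1 - I * L I)/2 + L I * I - L 1) * hg' + ((g'.im : ℂ) * L I / 2) * hI

lemma wderiv_mul {f g : ℂ → ℂ} {z : ℂ} (hf : DifferentiableAt ℝ f z)
    (hg : DifferentiableAt ℝ g z) :
    wderiv (fun w => f w * g w) z = wderiv f z * g z + f z * wderiv g z := by
  unfold wderiv
  rw [fderiv_fun_mul hf hg]
  simp only [ContinuousLinearMap.add_apply, ContinuousLinearMap.smul_apply, smul_eq_mul]
  ring

lemma wderiv_sub {f g : ℂ → ℂ} {z : ℂ} (hf : DifferentiableAt ℝ f z)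
    (hg : DifferentiableAt ℝ g z) :
    wderiv (fun w => f w - g w) z = wderiv f z - wderiv g z := by
  unfold wderiv
  rw [fderiv_fun_sub hf hg]
  simp only [ContinuousLinearMap.sub_apply]
  ring

lemma wderiv_const_mul {f : ℂ → ℂ} {z : ℂ} (c : ℂ) (hf : DifferentiableAt ℝ f z) :
    wderiv (fun w => c * f w) z = c * wderiv f z := by
  unfold wderiv
  rw [fderiv_const_mul hf c]
  simp only [ContinuousLinearMap.smul_apply, smul_eq_mul]
  ring

-- wderiv of conjugate of a holomorphic function is 0
lemma wderiv_conj (z : ℂ) : wderiv (fun w => (starRingEnd ℂ) w) z = 0 := by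
  unfold wderiv
  have h : fderiv ℝ (fun w => (starRingEnd ℂ) w) z = Complex.conjCLE.toContinuousLinearMap := by
    rw [show (fun w => (starRingEnd ℂ) w) = ⇑Complex.conjCLE from funext fun w => (Complex.conjCLE_apply w).symm]
    exact Complex.conjCLE.fderiv
  rw [h]
  simp [Complex.conjCLE_apply, Complex.conj_I]

lemma wderiv_conj_comp {g : ℂ → ℂ} {g' z : ℂ} (hg : HasDerivAt g g' z) :
    wderiv (fun w => (starRingEnd ℂ) (g w)) z = 0 := by
  have hd : DifferentiableAt ℝ (fun w => (starRingEnd ℂ) w) (g z) :=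
    Complex.conjCLE.differentiable.differentiableAt
  rw [wderiv_comp hg hd, wderiv_conj, zero_mul]

lemma ContDiff.wderiv_smooth {f : ℂ → ℂ} (hf : ContDiff ℝ (⊤:ℕ∞) f) :
    ContDiff ℝ (⊤:ℕ∞) (wderiv f) := by
  have h1 : ContDiff ℝ (⊤:ℕ∞) (fderiv ℝ f) := (contDiff_infty_iff_fderiv.mp hf).2
  have h2 : ContDiff ℝ (⊤:ℕ∞) (fun z => fderiv ℝ f z 1) := h1.clm_apply contDiff_const
  have h3 : ContDiff ℝ (⊤:ℕ∞) (fun z => fderiv ℝ f z Complex.I) := h1.clm_apply contDiff_const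
  exact ((h2.sub (contDiff_const.mul h3)).div_const 2)

set_option maxHeartbeats 4000000 in
/-- If `F` is invariant as a Beltrami differential, `(F∘γ)·(γ̄'/γ') = F`, then
`B[F,G] − (B[F,G]∘γ)·γ̄' = B[F,H]` with `H = G − (G∘γ)/γ'`. -/
theorem Bform_beltrami_identity (a b c d : ℝ) (habcd : a * d - b * c = 1)
    (q F G : ℂ → ℂ)
    (hF : ContDiff ℝ (⊤ : ℕ∞) F) (hG : ContDiff ℝ (⊤ : ℕ∞) G) (hq : ContDiff ℝ (⊤ : ℕ∞) q)
    (γ : ℂ → ℂ) (hγ : γ = fun z => ((a : ℂ) * z + b) / ((c : ℂ) * z + d))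
    (hq4 : ∀ z, 0 < z.im → q (γ z) * (deriv γ z) ^ 2 = q z)
    (hFinv : ∀ z, 0 < z.im →
      F (γ z) * (starRingEnd ℂ (deriv γ z) / deriv γ z) = F z)
    (H : ℂ → ℂ) (hH : ∀ z, H z = G z - G (γ z) / deriv γ z) :
    ∀ z, 0 < z.im →
      Bform q F G z - Bform q F G (γ z) * starRingEnd ℂ (deriv γ z)
        = Bform q F H z := by
  -- basic setup
  set u : ℂ → ℂ := fun w => (c:ℂ)*w + (d:ℂ) with hu_def
  have hdet : (a:ℂ)*(d:ℂ) - (b:ℂ)*(c:ℂ) = 1 := by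
    exact_mod_cast habcd
  have hune : ∀ w : ℂ, 0 < w.im → u w ≠ 0 := by
    intro w hw h0
    have him : (u w).im = c * w.im := by simp [hu_def, Complex.add_im, Complex.mul_im]
    have hre : (u w).re = c * w.re + d := by simp [hu_def, Complex.add_re, Complex.mul_re]
    rw [h0] at him hre
    simp at him hre
    rcases him with hc | hwim
    · rw [hc] at hre; simp at hre
      rw [hc, ← hre] at habcd; simp at habcd
    · exact absurd hwim (ne_of_gt hw)
  have hu' : ∀ w : ℂ, HasDerivAt u (c:ℂ) w := by
    intro w
    exact (((hasDerivAt_id w).const_mul (c:ℂ)).add_const (d:ℂ)).congr_deriv (mul_one _)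
  have husq : ∀ w : ℂ, HasDerivAt (fun w => (u w)^2) (2 * u w * (c:ℂ)) w := by
    intro w
    simpa using ((hu' w).fun_pow 2)
  have hγ' : ∀ w : ℂ, 0 < w.im → HasDerivAt γ (((u w)^2)⁻¹) w := by
    intro w hw
    have hnum : HasDerivAt (fun z : ℂ => (a:ℂ)*z + (b:ℂ)) (a:ℂ) w := by
      simpa using (((hasDerivAt_id w).const_mul (a:ℂ)).add_const (b:ℂ))
    have h := hnum.div (hu' w) (hune w hw)
    have hval : ((a:ℂ) * u w - ((a:ℂ)*w + (b:ℂ)) * (c:ℂ)) / (u w)^2 = ((u w)^2)⁻¹ := by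
      rw [inv_eq_one_div]
      congr 1
      simp only [hu_def]
      linear_combination hdet
    rw [hγ]
    rw [hval] at h
    exact h
  have hdγ : ∀ w : ℂ, 0 < w.im → deriv γ w = ((u w)^2)⁻¹ := fun w hw => (hγ' w hw).deriv
  have hmem : ∀ w : ℂ, 0 < w.im → 0 < (γ w).im := by
    intro w hw
    have hune' := hune w hw
    have h1 : (γ w).im = w.im / Complex.normSq (u w) := by
      rw [hγ]
      simp only []
      rw [Complex.div_im]
      rw [div_sub_div_same]
      have hnum : ((a:ℂ)*w + (b:ℂ)).im * ((c:ℂ)*w + (d:ℂ)).re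
          - ((a:ℂ)*w + (b:ℂ)).re * ((c:ℂ)*w + (d:ℂ)).im = w.im := by
        simp [Complex.add_re, Complex.add_im, Complex.mul_re, Complex.mul_im]
        linear_combination w.im * habcd
      rw [hnum]
    rw [h1]
    exact div_pos hw (Complex.normSq_pos.mpr hune')
  -- smoothness / differentiability facts
  have hFi : ContDiff ℝ (⊤:ℕ∞) F := hF.of_le (by simp)
  have hGi : ContDiff ℝ (⊤:ℕ∞) G := hG.of_le (by simp)
  have hFd : Differentiable ℝ F := hFi.differentiable (by simp)
  have hGd : Differentiable ℝ G := hGi.differentiable (by simp)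
  have hF1d : Differentiable ℝ (wderiv F) := hFi.wderiv_smooth.differentiable (by simp)
  have hG1d : Differentiable ℝ (wderiv G) := hGi.wderiv_smooth.differentiable (by simp)
  have hγd : ∀ w : ℂ, 0 < w.im → DifferentiableAt ℝ γ w :=
    fun w hw => ((hγ' w hw).differentiableAt).restrictScalars ℝ
  have hud : Differentiable ℝ u := (differentiable_id.const_mul ((c:ℂ))).add_const (d:ℂ)
  have hconjd : Differentiable ℝ (fun w => starRingEnd ℂ (u w)) :=
    Complex.conjCLE.differentiable.comp hud
  have hconj2d : Differentiable ℝ (fun w => (starRingEnd ℂ (u w))^2) := hconjd.pow 2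
  have husqd : Differentiable ℝ (fun w => (u w)^2) := hud.pow 2
  have dinv2 : ∀ w : ℂ, 0 < w.im → DifferentiableAt ℝ (fun w => ((u w)^2)⁻¹) w :=
    fun w hw => ((husq w).inv (pow_ne_zero 2 (hune w hw))).differentiableAt.restrictScalars ℝ
  have dinv1 : ∀ w : ℂ, 0 < w.im → DifferentiableAt ℝ (fun w => (u w)⁻¹) w :=
    fun w hw => ((hu' w).inv (hune w hw)).differentiableAt.restrictScalars ℝ
  have dFγ : ∀ w : ℂ, 0 < w.im → DifferentiableAt ℝ (fun w => F (γ w)) w :=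
    fun w hw => (hFd _).comp w (hγd w hw)
  have dGγ : ∀ w : ℂ, 0 < w.im → DifferentiableAt ℝ (fun w => G (γ w)) w :=
    fun w hw => (hGd _).comp w (hγd w hw)
  have dG1γ : ∀ w : ℂ, 0 < w.im → DifferentiableAt ℝ (fun w => wderiv G (γ w)) w :=
    fun w hw => (hG1d _).comp w (hγd w hw)
  have huinv2 : ∀ w : ℂ, 0 < w.im →
      HasDerivAt (fun w => ((u w)^2)⁻¹) (-(2 * u w * (c:ℂ)) / ((u w)^2)^2) w :=
    fun w hw => (husq w).inv (pow_ne_zero 2 (hune w hw))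
  have huinv : ∀ w : ℂ, 0 < w.im → HasDerivAt (fun w => (u w)⁻¹) (-(c:ℂ) / (u w)^2) w :=
    fun w hw => (hu' w).inv (hune w hw)
  have hconj2w : ∀ w : ℂ, wderiv (fun w => (starRingEnd ℂ (u w))^2) w = 0 := by
    intro w
    have he : (fun w => (starRingEnd ℂ (u w))^2) = fun w => starRingEnd ℂ ((u w)^2) := by
      funext w; rw [map_pow]
    rw [he]
    exact wderiv_conj_comp (husq w)
  have hDopen : IsOpen {w : ℂ | 0 < w.im} := isOpen_lt continuous_const Complex.continuous_im
  have hcne : ∀ w : ℂ, 0 < w.im → starRingEnd ℂ (u w) ≠ 0 := by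
    intro w hw; simpa using hune w hw
  -- Step 1: value of F ∘ γ
  have hFγ : ∀ w : ℂ, 0 < w.im →
      F (γ w) = F w * (starRingEnd ℂ (u w))^2 * ((u w)^2)⁻¹ := by
    intro w hw
    have h := hFinv w hw
    rw [hdγ w hw, map_inv₀, map_pow] at h
    have h1 := hune w hw
    have h2 := hcne w hw
    field_simp at h ⊢
    linear_combination h
  -- Step 2: wderiv F at γ
  have hF1γ : ∀ z : ℂ, 0 < z.im →
      wderiv F (γ z) = (starRingEnd ℂ (u z))^2
        * (wderiv F z - 2*(c:ℂ)*(F z * (u z)⁻¹)) := by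
    intro z hz
    have hev : (fun w => F (γ w)) =ᶠ[nhds z]
        (fun w => F w * (starRingEnd ℂ (u w))^2 * ((u w)^2)⁻¹) := by
      filter_upwards [hDopen.mem_nhds hz] with w hw
      exact hFγ w hw
    have hL : wderiv (fun w => F (γ w)) z = wderiv F (γ z) * ((u z)^2)⁻¹ :=
      wderiv_comp (hγ' z hz) (hFd _)
    have hR : wderiv (fun w => F w * (starRingEnd ℂ (u w))^2 * ((u w)^2)⁻¹) z
        = (wderiv F z * (starRingEnd ℂ (u z))^2 + F z * 0) * ((u z)^2)⁻¹
          + F z * (starRingEnd ℂ (u z))^2 * (-(2 * u z * (c:ℂ)) / ((u z)^2)^2) := by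
      rw [wderiv_mul ((hFd z).fun_mul (hconj2d z)) (dinv2 z hz),
        wderiv_mul (hFd z) (hconj2d z), hconj2w z, (huinv2 z hz).wderiv_eq]
    have hkey : wderiv F (γ z) * ((u z)^2)⁻¹
        = (wderiv F z * (starRingEnd ℂ (u z))^2 + F z * 0) * ((u z)^2)⁻¹
          + F z * (starRingEnd ℂ (u z))^2 * (-(2 * u z * (c:ℂ)) / ((u z)^2)^2) := by
      rw [← hL, wderiv_congr hev, hR]
    have h1 := hune z hz
    calc wderiv F (γ z) = (wderiv F (γ z) * ((u z)^2)⁻¹) * (u z)^2 := by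
          field_simp
      _ = ((wderiv F z * (starRingEnd ℂ (u z))^2 + F z * 0) * ((u z)^2)⁻¹
          + F z * (starRingEnd ℂ (u z))^2 * (-(2 * u z * (c:ℂ)) / ((u z)^2)^2)) * (u z)^2 := by
          rw [hkey]
      _ = _ := by field_simp; ring
  -- Step 3: second wderiv of F at γ
  have hF2γ : ∀ z : ℂ, 0 < z.im →
      wderiv (wderiv F) (γ z) = (starRingEnd ℂ (u z))^2
        * ((u z)^2 * wderiv (wderiv F) z - 2*(c:ℂ)*(u z)*(wderiv F z)
            + 2*(c:ℂ)^2*(F z)) := by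
    intro z hz
    have hev : (fun w => wderiv F (γ w)) =ᶠ[nhds z]
        (fun w => (starRingEnd ℂ (u w))^2
          * (wderiv F w - 2*(c:ℂ)*(F w * (u w)⁻¹))) := by
      filter_upwards [hDopen.mem_nhds hz] with w hw
      exact hF1γ w hw
    have hL : wderiv (fun w => wderiv F (γ w)) z
        = wderiv (wderiv F) (γ z) * ((u z)^2)⁻¹ :=
      wderiv_comp (hγ' z hz) (hF1d _)
    have hR : wderiv (fun w => (starRingEnd ℂ (u w))^2
          * (wderiv F w - 2*(c:ℂ)*(F w * (u w)⁻¹))) z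
        = 0 * (wderiv F z - 2*(c:ℂ)*(F z * (u z)⁻¹))
          + (starRingEnd ℂ (u z))^2
            * (wderiv (wderiv F) z
               - 2*(c:ℂ)*(wderiv F z * (u z)⁻¹ + F z * (-(c:ℂ) / (u z)^2))) := by
      rw [wderiv_mul (hconj2d z)
          ((hF1d z).fun_sub (((hFd z).fun_mul (dinv1 z hz)).const_mul (2*(c:ℂ)))),
        hconj2w z,
        wderiv_sub (hF1d z) (((hFd z).fun_mul (dinv1 z hz)).const_mul (2*(c:ℂ))),
        wderiv_const_mul (2*(c:ℂ)) ((hFd z).fun_mul (dinv1 z hz)),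
        wderiv_mul (hFd z) (dinv1 z hz), (huinv z hz).wderiv_eq]
    have hkey : wderiv (wderiv F) (γ z) * ((u z)^2)⁻¹
        = 0 * (wderiv F z - 2*(c:ℂ)*(F z * (u z)⁻¹))
          + (starRingEnd ℂ (u z))^2
            * (wderiv (wderiv F) z
               - 2*(c:ℂ)*(wderiv F z * (u z)⁻¹ + F z * (-(c:ℂ) / (u z)^2))) := by
      rw [← hL, wderiv_congr hev, hR]
    have h1 := hune z hz
    calc wderiv (wderiv F) (γ z)
        = (wderiv (wderiv F) (γ z) * ((u z)^2)⁻¹) * (u z)^2 := by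
          field_simp
      _ = (0 * (wderiv F z - 2*(c:ℂ)*(F z * (u z)⁻¹))
          + (starRingEnd ℂ (u z))^2
            * (wderiv (wderiv F) z
               - 2*(c:ℂ)*(wderiv F z * (u z)⁻¹ + F z * (-(c:ℂ) / (u z)^2)))) * (u z)^2 := by
          rw [hkey]
      _ = _ := by field_simp; ring
  -- G chain rules
  have hGγ1 : ∀ z : ℂ, 0 < z.im →
      wderiv (fun w => G (γ w)) z = wderiv G (γ z) * ((u z)^2)⁻¹ :=
    fun z hz => wderiv_comp (hγ' z hz) (hGd _)
  have hG1γ1 : ∀ z : ℂ, 0 < z.im →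
      wderiv (fun w => wderiv G (γ w)) z = wderiv (wderiv G) (γ z) * ((u z)^2)⁻¹ :=
    fun z hz => wderiv_comp (hγ' z hz) (hG1d _)
  -- H value
  have hHev : ∀ w : ℂ, 0 < w.im → H w = G w - G (γ w) * (u w)^2 := by
    intro w hw
    rw [hH w, hdγ w hw]
    rw [div_eq_mul_inv, inv_inv]
  -- first wderiv of H
  have hH1 : ∀ z : ℂ, 0 < z.im →
      wderiv H z = wderiv G z - (wderiv G (γ z) * ((u z)^2)⁻¹ * (u z)^2
        + G (γ z) * (2 * u z * (c:ℂ))) := by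
    intro z hz
    have hev : H =ᶠ[nhds z] (fun w => G w - G (γ w) * (u w)^2) := by
      filter_upwards [hDopen.mem_nhds hz] with w hw
      exact hHev w hw
    rw [wderiv_congr hev,
      wderiv_sub (hGd z) ((dGγ z hz).fun_mul (husqd z)),
      wderiv_mul (dGγ z hz) (husqd z), hGγ1 z hz, (husq z).wderiv_eq]
  -- clean form of wderiv H on D
  have hH1' : ∀ z : ℂ, 0 < z.im →
      wderiv H z = wderiv G z - wderiv G (γ z) - 2*(c:ℂ)*(u z * G (γ z)) := by
    intro z hz
    rw [hH1 z hz]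
    have h1 := hune z hz
    field_simp
    ring
  -- second wderiv of H
  have hH2 : ∀ z : ℂ, 0 < z.im →
      wderiv (wderiv H) z = wderiv (wderiv G) z
        - wderiv (wderiv G) (γ z) * ((u z)^2)⁻¹
        - 2*(c:ℂ)*((c:ℂ) * G (γ z) + u z * (wderiv G (γ z) * ((u z)^2)⁻¹)) := by
    intro z hz
    have hev : wderiv H =ᶠ[nhds z]
        (fun w => wderiv G w - wderiv G (γ w) - 2*(c:ℂ)*(u w * G (γ w))) := by
      filter_upwards [hDopen.mem_nhds hz] with w hw
      exact hH1' w hw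
    have hud' : DifferentiableAt ℝ u z := hud z
    rw [wderiv_congr hev,
      wderiv_sub ((hG1d z).fun_sub (dG1γ z hz))
        (((hud z).fun_mul (dGγ z hz)).const_mul (2*(c:ℂ))),
      wderiv_sub (hG1d z) (dG1γ z hz),
      wderiv_const_mul (2*(c:ℂ)) ((hud z).fun_mul (dGγ z hz)),
      wderiv_mul (hud z) (dGγ z hz),
      (hu' z).wderiv_eq, hG1γ1 z hz, hGγ1 z hz]
  -- q transformation
  have hqγ : ∀ z : ℂ, 0 < z.im → q (γ z) = q z * (u z)^4 := by
    intro z hz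
    have h := hq4 z hz
    rw [hdγ z hz] at h
    have h1 := hune z hz
    field_simp at h
    linear_combination h
  -- final computation
  intro z hz
  have h1 := hune z hz
  have h2 := hcne z hz
  rw [hdγ z hz, map_inv₀, map_pow]
  unfold Bform
  rw [hFγ z hz, hF1γ z hz, hF2γ z hz, hqγ z hz, hHev z hz, hH1' z hz, hH2 z hz]
  generalize hU : u z = U at h1 h2 ⊢
  generalize hC : (starRingEnd ℂ) U = C at h2 ⊢
  field_simp [h1, h2]
  ring
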